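/- Let p be a prime, let k ≥ 1 be an integer, let ε > 0 be fixed, let X ≥ 1 be real, and let m ∈ 𝔽_p^*. Then the number of k-tuples (a₁, …, a_k) ∈ ℤ^k with 0 < |a_i| ≤ X for each i and a₁ ⋯ a_k ≡ m (mod p) is ≪_{k,ε} X^ε (1 + X^k/p), where the implied constant depends only on k and ε. -/

import Mathlib

open Finset Real

lemma term_bound (δ : ℝ) (hδ : 0 < δ) (N : ℕ) (hN : (2:ℝ)^(1/δ) ≤ N)
    (p : ℕ) (hp : p.Prime) (e : ℕ) :
    ((e:ℝ) + 1) ≤ (if p ≤ N then (1 + 1/(δ * Real.log 2)) else 1) * (p:ℝ) ^ ((e:ℝ) * δ) := by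
  have h2 : (2:ℝ) ≤ (p:ℝ) := by exact_mod_cast hp.two_le
  have hL : 0 < Real.log 2 := Real.log_pos (by norm_num)
  have hed : 0 ≤ (e:ℝ) * δ := by positivity
  split_ifs with h
  · -- small prime: use (p:ℝ)^(eδ) ≥ 2^(eδ) = exp(eδ log 2)
    have h1 : (2:ℝ) ^ ((e:ℝ) * δ) ≤ (p:ℝ) ^ ((e:ℝ) * δ) :=
      Real.rpow_le_rpow (by norm_num) h2 hed
    have h2' : (2:ℝ) ^ ((e:ℝ) * δ) = Real.exp ((e:ℝ) * δ * Real.log 2) := by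
      rw [Real.rpow_def_of_pos (by norm_num)]; ring_nf
    have hexp : (e:ℝ) * δ * Real.log 2 + 1 ≤ Real.exp ((e:ℝ) * δ * Real.log 2) :=
      Real.add_one_le_exp _
    set t := (e:ℝ) * δ * Real.log 2 with ht
    have he : 0 ≤ t := by positivity
    have key : (e:ℝ) + 1 ≤ (1 + 1/(δ * Real.log 2)) * Real.exp t := by
      have h3 : 1 ≤ Real.exp t := by linarith
      have h4 : (e:ℝ) * (δ * Real.log 2) ≤ Real.exp t := by rw [ht] at hexp ⊢; nlinarith
      have h5 : 0 < δ * Real.log 2 := by positivity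
      have h6 : (e:ℝ) ≤ Real.exp t / (δ * Real.log 2) := by
        rw [le_div_iff₀ h5]; exact h4
      have : (1 + 1/(δ * Real.log 2)) * Real.exp t = Real.exp t + Real.exp t / (δ * Real.log 2) := by
        field_simp
      rw [this]; linarith
    calc (e:ℝ) + 1 ≤ (1 + 1/(δ * Real.log 2)) * Real.exp t := key
      _ = (1 + 1/(δ * Real.log 2)) * (2:ℝ) ^ ((e:ℝ) * δ) := by rw [h2']
      _ ≤ (1 + 1/(δ * Real.log 2)) * (p:ℝ) ^ ((e:ℝ) * δ) := by
          apply mul_le_mul_of_nonneg_left h1; positivity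
  · -- large prime: p^δ ≥ 2, so p^{eδ} ≥ 2^e ≥ e+1
    push_neg at h
    have hpN : (N:ℝ) < (p:ℝ) := by exact_mod_cast h
    have hp2 : (2:ℝ) ≤ (p:ℝ) ^ δ := by
      calc (2:ℝ) = ((2:ℝ)^(1/δ)) ^ δ := by
            rw [← Real.rpow_mul (by norm_num), one_div_mul_cancel hδ.ne', Real.rpow_one]
        _ ≤ (p:ℝ) ^ δ := by
            apply Real.rpow_le_rpow (by positivity) (le_trans hN (le_of_lt hpN)) hδ.le
    have : (p:ℝ) ^ ((e:ℝ) * δ) = ((p:ℝ) ^ δ) ^ e := by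
      rw [← Real.rpow_natCast ((p:ℝ)^δ) e, ← Real.rpow_mul (by positivity)]; ring_nf
    rw [one_mul, this]
    calc (e:ℝ) + 1 ≤ (2:ℝ) ^ e := by
          have := Nat.lt_two_pow_self (n := e)
          exact_mod_cast Nat.succ_le_of_lt this
      _ ≤ ((p:ℝ) ^ δ) ^ e := pow_le_pow_left₀ (by norm_num) hp2 e

lemma divisor_bound (δ : ℝ) (hδ : 0 < δ) :
    ∃ C : ℝ, 1 ≤ C ∧ ∀ n : ℕ, n ≠ 0 → (n.divisors.card : ℝ) ≤ C * (n : ℝ) ^ δ := by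
  set B : ℝ := 1 + 1/(δ * Real.log 2) with hB
  have hL : 0 < Real.log 2 := Real.log_pos (by norm_num)
  have hB1 : 1 ≤ B := by rw [hB]; have : 0 < 1/(δ * Real.log 2) := by positivity
                         linarith
  set N : ℕ := ⌈(2:ℝ)^(1/δ)⌉₊ with hNdef
  have hN : (2:ℝ)^(1/δ) ≤ N := Nat.le_ceil _
  refine ⟨B ^ (N + 1), one_le_pow₀ hB1, fun n hn => ?_⟩
  have hcard : (n.divisors.card : ℝ) = ∏ p ∈ n.primeFactors, ((n.factorization p : ℝ) + 1) := by
    rw [Nat.card_divisors hn]; push_cast; rfl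
  have hself : (n:ℝ) = ∏ p ∈ n.primeFactors, (p:ℝ) ^ (n.factorization p) := by
    conv_lhs => rw [← Nat.factorization_prod_pow_eq_self hn]
    rw [Nat.prod_factorization_eq_prod_primeFactors]
    push_cast
    rfl
  have hrpow : (n:ℝ) ^ δ = ∏ p ∈ n.primeFactors, (p:ℝ) ^ ((n.factorization p : ℝ) * δ) := by
    rw [hself, ← Real.finset_prod_rpow _ _ (fun p _ => by positivity) δ]
    refine Finset.prod_congr rfl fun p hp => ?_
    rw [← Real.rpow_natCast (p:ℝ) (n.factorization p), ← Real.rpow_mul (by positivity)]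
  have hterm : ∀ p ∈ n.primeFactors,
      ((n.factorization p : ℝ) + 1) ≤
        (if p ≤ N then B else 1) * (p:ℝ) ^ ((n.factorization p : ℝ) * δ) := fun p hp =>
    term_bound δ hδ N hN p (Nat.prime_of_mem_primeFactors hp) _
  calc (n.divisors.card : ℝ)
      = ∏ p ∈ n.primeFactors, ((n.factorization p : ℝ) + 1) := hcard
    _ ≤ ∏ p ∈ n.primeFactors, (if p ≤ N then B else 1) * (p:ℝ) ^ ((n.factorization p : ℝ) * δ) :=
        Finset.prod_le_prod (fun p _ => by positivity) hterm
    _ = (∏ p ∈ n.primeFactors, (if p ≤ N then B else 1)) *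
        ∏ p ∈ n.primeFactors, (p:ℝ) ^ ((n.factorization p : ℝ) * δ) := Finset.prod_mul_distrib
    _ ≤ B ^ (N + 1) * (n:ℝ) ^ δ := by
        rw [← hrpow]
        apply mul_le_mul_of_nonneg_right _ (by positivity)
        rw [Finset.prod_ite, Finset.prod_const, Finset.prod_const, one_pow, mul_one]
        apply pow_le_pow_right₀ hB1
        calc (Finset.filter (fun p => p ≤ N) n.primeFactors).card
            ≤ (Finset.range (N+1)).card := Finset.card_le_card (fun x hx => by
              simp only [Finset.mem_filter] at hx
              exact Finset.mem_range.mpr (Nat.lt_succ_of_le hx.2))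
          _ = N + 1 := Finset.card_range _

/-- For fixed `k ≥ 1` and `ε > 0`: for every prime `p`, every real `X ≥ 1` and every `m ∈ 𝔽_p^*`,
the number of `k`-tuples `(a₁, …, a_k) ∈ ℤ^k` with `0 < |aᵢ| ≤ X` for each `i` and
`a₁ ⋯ a_k ≡ m (mod p)` is `≪_{k,ε} X^ε (1 + X^k/p)`. -/
theorem stmt10 (k : ℕ) (hk : 1 ≤ k) (ε : ℝ) (hε : 0 < ε) :
    ∃ C : ℝ, 0 < C ∧ ∀ p : ℕ, p.Prime → ∀ X : ℝ, 1 ≤ X → ∀ m : ZMod p, m ≠ 0 →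
      (((Fintype.piFinset fun _ : Fin k => Finset.Icc (-⌊X⌋) ⌊X⌋).filter
          (fun a : Fin k → ℤ => (∀ i, a i ≠ 0) ∧ ((∏ i, a i : ℤ) : ZMod p) = m)).card : ℝ) ≤
        C * (X ^ ε * (1 + X ^ k / p)) := by

  have hk0 : (k:ℝ) ≠ 0 := by positivity
  obtain ⟨C₀, hC₀1, hC₀⟩ := divisor_bound (ε / (k*k)) (by positivity)
  have hC₀0 : 0 < C₀ := lt_of_lt_of_le one_pos hC₀1
  refine ⟨2 * (2*C₀)^k, by positivity, ?_⟩
  intro p hp X hX m hm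
  have hp0 : 0 < (p:ℤ) := by exact_mod_cast hp.pos
  have hX0 : (0:ℝ) < X := lt_of_lt_of_le one_pos hX
  set L : ℤ := ⌊X⌋ with hLdef
  have hL1 : 1 ≤ L := by exact_mod_cast Int.le_floor.mpr (by simpa using hX)
  have hLX : (L:ℝ) ≤ X := Int.floor_le X
  have hLk : ((L:ℝ))^k ≤ X^k := pow_le_pow_left₀ (by positivity) hLX k
  set S := (Fintype.piFinset fun _ : Fin k => Finset.Icc (-L) L).filter
      (fun a : Fin k → ℤ => (∀ i, a i ≠ 0) ∧ ((∏ i, a i : ℤ) : ZMod p) = m) with hSdef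
  set T : Finset ℤ := (Finset.Icc (-(L^k)) (L^k)).filter
      (fun n => n ≠ 0 ∧ ((n : ZMod p) = m)) with hTdef
  -- every tuple's product lands in T
  have hmaps : ∀ a ∈ S, (∏ i, a i) ∈ T := by
    intro a ha
    rw [hSdef, Finset.mem_filter] at ha
    obtain ⟨hmem, hne, hprod⟩ := ha
    rw [Fintype.mem_piFinset] at hmem
    have habs : |∏ i, a i| ≤ L^k := by
      rw [Finset.abs_prod]
      calc ∏ i, |a i| ≤ ∏ _i : Fin k, L := by
            apply Finset.prod_le_prod (fun i _ => abs_nonneg _)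
            intro i _
            have := hmem i; rw [Finset.mem_Icc] at this
            exact abs_le.mpr this
        _ = L^k := by rw [Finset.prod_const, Finset.card_univ, Fintype.card_fin]
    refine Finset.mem_filter.mpr ⟨Finset.mem_Icc.mpr (abs_le.mp habs), ?_, hprod⟩
    exact Finset.prod_ne_zero_iff.mpr (fun i _ => hne i)
  have hcardsum : S.card = ∑ n ∈ T, (S.filter (fun a => ∏ i, a i = n)).card :=
    Finset.card_eq_sum_card_fiberwise hmaps
  -- fiber bound
  have hfiber : ∀ n ∈ T, ((S.filter (fun a => ∏ i, a i = n)).card : ℝ) ≤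
      (2 * C₀ * X ^ (ε/k)) ^ k := by
    intro n hn
    rw [hTdef, Finset.mem_filter, Finset.mem_Icc] at hn
    obtain ⟨⟨hn1, hn2⟩, hn0, -⟩ := hn
    set D : Finset ℤ := (n.natAbs.divisors.image (fun d : ℕ => (d:ℤ))) ∪
        (n.natAbs.divisors.image (fun d : ℕ => -(d:ℤ))) with hDdef
    have hsub : S.filter (fun a => ∏ i, a i = n) ⊆ Fintype.piFinset (fun _ : Fin k => D) := by
      intro a ha
      rw [Finset.mem_filter] at ha
      obtain ⟨haS, hpn⟩ := ha
      rw [hSdef, Finset.mem_filter] at haS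
      obtain ⟨-, hne, -⟩ := haS
      rw [Fintype.mem_piFinset]
      intro i
      have hdvd : a i ∣ n := hpn ▸ Finset.dvd_prod_of_mem a (Finset.mem_univ i)
      have hdmem : (a i).natAbs ∈ n.natAbs.divisors :=
        Nat.mem_divisors.mpr ⟨Int.natAbs_dvd_natAbs.mpr hdvd, Int.natAbs_ne_zero.mpr hn0⟩
      rcases Int.natAbs_eq (a i) with h | h
      · exact Finset.mem_union_left _ (Finset.mem_image.mpr ⟨_, hdmem, h.symm⟩)
      · exact Finset.mem_union_right _ (Finset.mem_image.mpr ⟨_, hdmem, h.symm⟩)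
    have hDcard : (D.card : ℝ) ≤ 2 * C₀ * X ^ (ε/k) := by
      have h1 : D.card ≤ 2 * n.natAbs.divisors.card := by
        rw [hDdef]
        have hu := Finset.card_union_le (n.natAbs.divisors.image (fun d : ℕ => (d:ℤ)))
          (n.natAbs.divisors.image (fun d : ℕ => -(d:ℤ)))
        have i1 : (n.natAbs.divisors.image (fun d : ℕ => (d:ℤ))).card ≤
            n.natAbs.divisors.card := Finset.card_image_le
        have i2 : (n.natAbs.divisors.image (fun d : ℕ => -(d:ℤ))).card ≤
            n.natAbs.divisors.card := Finset.card_image_le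
        exact hu.trans (by linarith)
      have h2 : (n.natAbs.divisors.card : ℝ) ≤ C₀ * (n.natAbs : ℝ) ^ (ε/(k*k)) :=
        hC₀ _ (Int.natAbs_ne_zero.mpr hn0)
      have h3 : ((n.natAbs : ℝ)) ^ (ε/(k*k)) ≤ X ^ (ε/k) := by
        have hna : (n.natAbs : ℝ) ≤ X ^ k := by
          have habs : |n| ≤ L^k := abs_le.mpr ⟨hn1, hn2⟩
          have h' : ((n.natAbs : ℕ) : ℝ) ≤ ((L:ℝ))^k := by
            rw [Nat.cast_natAbs]
            exact_mod_cast habs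
          linarith [hLk]
        calc ((n.natAbs : ℝ)) ^ (ε/(k*k)) ≤ (X^k) ^ (ε/(k*k)) :=
              Real.rpow_le_rpow (by positivity) hna (by positivity)
          _ = X ^ (ε/k) := by
              rw [← Real.rpow_natCast X k, ← Real.rpow_mul hX0.le]
              congr 1
              field_simp
      calc (D.card : ℝ) ≤ 2 * (n.natAbs.divisors.card : ℝ) := by exact_mod_cast h1
        _ ≤ 2 * (C₀ * (n.natAbs : ℝ) ^ (ε/(k*k))) := by linarith
        _ ≤ 2 * (C₀ * X ^ (ε/k)) := by
            have := mul_le_mul_of_nonneg_left h3 hC₀0.le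
            linarith
        _ = 2 * C₀ * X ^ (ε/k) := by ring
    calc ((S.filter (fun a => ∏ i, a i = n)).card : ℝ)
        ≤ ((Fintype.piFinset (fun _ : Fin k => D)).card : ℝ) := by
          exact_mod_cast Finset.card_le_card hsub
      _ = ((D.card : ℝ)) ^ k := by
          rw [Fintype.card_piFinset]
          push_cast
          rw [Finset.prod_const, Finset.card_univ, Fintype.card_fin]
      _ ≤ (2 * C₀ * X ^ (ε/k)) ^ k := pow_le_pow_left₀ (by positivity) hDcard k
  -- count of T
  have hTcard : (T.card : ℝ) ≤ 2 * X^k / p + 1 := by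
    set q : ℤ := (2 * L^k) / p with hqdef
    have hq0 : 0 ≤ q := Int.ediv_nonneg (by positivity) hp0.le
    have hcardle : T.card ≤ (Finset.Icc (0:ℤ) q).card := by
      apply Finset.card_le_card_of_injOn (fun n => (n + L^k) / p)
      · intro n hn
        rw [hTdef, Finset.mem_coe, Finset.mem_filter, Finset.mem_Icc] at hn
        obtain ⟨⟨hn1, hn2⟩, -, -⟩ := hn
        rw [Finset.mem_coe, Finset.mem_Icc]
        exact ⟨Int.ediv_nonneg (by linarith) hp0.le, Int.ediv_le_ediv hp0 (by linarith)⟩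
      · intro n₁ h₁ n₂ h₂ hq
        simp only [hTdef, Finset.coe_filter, Set.mem_setOf_eq, Finset.mem_Icc,
          Finset.mem_coe, Finset.mem_filter] at h₁ h₂
        obtain ⟨-, -, hm₁⟩ := h₁
        obtain ⟨-, -, hm₂⟩ := h₂
        have hmeq : ((n₁ : ZMod p)) = (n₂ : ZMod p) := hm₁.trans hm₂.symm
        have hmod : n₁ ≡ n₂ [ZMOD (p:ℕ)] := (ZMod.intCast_eq_intCast_iff _ _ _).mp hmeq
        have hmod2 : (n₁ + L^k) % (p:ℤ) = (n₂ + L^k) % (p:ℤ) := Int.ModEq.add_right _ hmod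
        have e₁ := Int.mul_ediv_add_emod (n₁ + L^k) (p:ℤ)
        have e₂ := Int.mul_ediv_add_emod (n₂ + L^k) (p:ℤ)
        simp only at hq
        rw [hq, hmod2] at e₁
        linarith
    have hIcc : ((Finset.Icc (0:ℤ) q).card : ℝ) = (q:ℝ) + 1 := by
      rw [Int.card_Icc, sub_zero]
      have ht : ((q+1).toNat : ℤ) = q + 1 := Int.toNat_of_nonneg (by linarith)
      have ht' : (((q+1).toNat : ℕ) : ℝ) = ((q : ℝ) + 1) := by exact_mod_cast ht
      rw [ht']
    have hqle : (q:ℝ) ≤ 2 * X^k / p := by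
      have hr := Int.emod_nonneg (2 * L^k) hp0.ne'
      have he := Int.mul_ediv_add_emod (2 * L^k) (p:ℤ)
      have hqp : (q:ℝ) * (p:ℝ) ≤ 2 * ((L:ℝ))^k := by
        have : (p:ℤ) * q ≤ 2 * L^k := by rw [hqdef] at *; linarith
        have h' : (((p:ℤ) * q : ℤ) : ℝ) ≤ ((2 * L^k : ℤ) : ℝ) := by exact_mod_cast this
        push_cast at h'
        linarith
      have hp0' : (0:ℝ) < (p:ℝ) := by exact_mod_cast hp0
      rw [← le_div_iff₀ hp0'] at hqp
      calc (q:ℝ) ≤ 2 * ((L:ℝ))^k / p := hqp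
        _ ≤ 2 * X^k / p := by
            gcongr
    calc (T.card : ℝ) ≤ ((Finset.Icc (0:ℤ) q).card : ℝ) := by exact_mod_cast hcardle
      _ = (q:ℝ) + 1 := hIcc
      _ ≤ 2 * X^k / p + 1 := by linarith
  -- combine
  have hsum : (S.card : ℝ) ≤ (T.card : ℝ) * (2 * C₀ * X ^ (ε/k)) ^ k := by
    rw [hcardsum]
    push_cast
    calc ∑ n ∈ T, ((S.filter (fun a => ∏ i, a i = n)).card : ℝ)
        ≤ ∑ _n ∈ T, (2 * C₀ * X ^ (ε/k)) ^ k := Finset.sum_le_sum hfiber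
      _ = (T.card : ℝ) * (2 * C₀ * X ^ (ε/k)) ^ k := by rw [Finset.sum_const, nsmul_eq_mul]
  have hXek : (X ^ (ε/k)) ^ k = X ^ ε := by
    rw [← Real.rpow_natCast (X ^ (ε/k)) k, ← Real.rpow_mul hX0.le]
    congr 1
    field_simp
  have hexp : (2 * C₀ * X ^ (ε/k)) ^ k = (2*C₀)^k * X ^ ε := by
    rw [mul_pow, hXek]
  have hrw : S.card = ((Fintype.piFinset fun _ : Fin k => Finset.Icc (-⌊X⌋) ⌊X⌋).filter
      (fun a : Fin k → ℤ => (∀ i, a i ≠ 0) ∧ ((∏ i, a i : ℤ) : ZMod p) = m)).card := rfl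
  rw [← hrw]
  have hpos : (0:ℝ) ≤ (2*C₀)^k * X ^ ε := by positivity
  calc (S.card : ℝ) ≤ (T.card : ℝ) * (2 * C₀ * X ^ (ε/k)) ^ k := hsum
    _ = (T.card : ℝ) * ((2*C₀)^k * X ^ ε) := by rw [hexp]
    _ ≤ (2 * X^k / p + 1) * ((2*C₀)^k * X ^ ε) := by
        apply mul_le_mul_of_nonneg_right hTcard hpos
    _ ≤ 2 * (2*C₀)^k * (X ^ ε * (1 + X ^ k / p)) := by
        have h1 : 2 * X^k / p + 1 ≤ 2 * (1 + X^k/p) := by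
          have : (0:ℝ) ≤ X^k / p := by positivity
          rw [mul_div_assoc]
          linarith
        nlinarith [hpos, Real.rpow_nonneg hX0.le ε, pow_nonneg (by positivity : (0:ℝ) ≤ 2*C₀) k]
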